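/- arXiv:1710.05580 — 5 statements merged into one kernel-verified Lean document; each statement's English description precedes it below -/
import Mathlib

section
/- Let G be a group acting freely on a set X (i.e. g•x = x implies g = 1). Let H and K be subgroups of G, and let D₀, D_K ⊆ X be subsets with h•D₀ = D₀ for all h ∈ H and k•D_K = D_K for all k ∈ K. For γ ∈ G set D(γ) = D₀ ∩ γ•D_K and K_γ = H ∩ γKγ⁻¹ (note D(γ) is stable under K_γ). Let 𝒦 be the set of pairs of orbits (H•z, K•w) with z ∈ D₀, w ∈ D_K and G•z = G•w. Then for any set R of representatives of the double cosets H\G/K, the map from the disjoint union ⊔_{γ ∈ R} D(γ)/K_γ to 𝒦 induced by sending z ∈ D(γ) to the pair (H•z, K•(γ⁻¹•z)) is well defined (constant on K_γ-orbits) and bijective. -/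
open Pointwise

theorem orbset_eq {G X : Type*} [Group G] [MulAction G X] (H : Subgroup G)
    {a b : X} {h0 : G} (hh0 : h0 ∈ H) (hab : h0 • a = b) :
    {x | ∃ h ∈ H, h • a = x} = {x | ∃ h ∈ H, h • b = x} := by
  ext x
  constructor
  · rintro ⟨h, hh, rfl⟩
    exact ⟨h * h0⁻¹, mul_mem hh (inv_mem hh0), by rw [mul_smul, ← hab, inv_smul_smul]⟩
  · rintro ⟨h, hh, rfl⟩
    exact ⟨h * h0, mul_mem hh hh0, by rw [mul_smul, hab]⟩

/-- Double coset decomposition of the fiber product: for a free action, the map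
from `⊔_{γ ∈ R} D(γ)/K_γ` (with `D(γ) = D₀ ∩ γ•D_K`, `K_γ = H ∩ γKγ⁻¹`) to the set
of pairs of orbits `(H•z, K•w)` with `G•z = G•w` is well defined and bijective. -/
theorem stmt_1 {G X : Type*} [Group G] [MulAction G X]
    (hfree : ∀ (g : G) (x : X), g • x = x → g = 1)
    (H K : Subgroup G) (D₀ DK : Set X)
    (hD₀ : ∀ h ∈ H, h • D₀ = D₀) (hDK : ∀ k ∈ K, k • DK = DK)
    (R : Set G)
    (hRex : ∀ g : G, ∃ γ ∈ R, ∃ h ∈ H, ∃ k ∈ K, g = h * γ * k)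
    (hRuniq : ∀ γ₁ ∈ R, ∀ γ₂ ∈ R, (∃ h ∈ H, ∃ k ∈ K, γ₂ = h * γ₁ * k) → γ₁ = γ₂) :
    ∃ F : (Σ γ : R, Quot (fun a b : {z : X // z ∈ D₀ ∩ (γ : G) • DK} =>
          ∃ g : G, g ∈ H ∧ (γ : G)⁻¹ * g * (γ : G) ∈ K ∧ g • (a : X) = (b : X))) →
        {p : Set X × Set X | ∃ z ∈ D₀, ∃ w ∈ DK,
          MulAction.orbit G z = MulAction.orbit G w ∧
          p = ({x | ∃ h ∈ H, h • z = x}, {x | ∃ k ∈ K, k • w = x})},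
      Function.Bijective F ∧
      ∀ (γ : R) (z : X) (hz : z ∈ D₀ ∩ (γ : G) • DK),
        (F ⟨γ, Quot.mk _ ⟨z, hz⟩⟩ : Set X × Set X) =
          ({x | ∃ h ∈ H, h • z = x}, {x | ∃ k ∈ K, k • ((γ : G)⁻¹ • z) = x}) := by
  classical
  set T := {p : Set X × Set X | ∃ z ∈ D₀, ∃ w ∈ DK,
      MulAction.orbit G z = MulAction.orbit G w ∧
      p = ({x | ∃ h ∈ H, h • z = x}, {x | ∃ k ∈ K, k • w = x})} with hT
  have fmem : ∀ (γ : R) (z : {z : X // z ∈ D₀ ∩ (γ : G) • DK}),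
      (({x | ∃ h ∈ H, h • (z : X) = x}, {x | ∃ k ∈ K, k • ((γ : G)⁻¹ • (z : X)) = x}) :
        Set X × Set X) ∈ T := by
    intro γ z
    refine ⟨(z : X), z.2.1, (γ : G)⁻¹ • (z : X),
      Set.mem_smul_set_iff_inv_smul_mem.mp z.2.2,
      (MulAction.orbit_smul _ _).symm, rfl⟩
  let f : ∀ γ : R, {z : X // z ∈ D₀ ∩ (γ : G) • DK} → T := fun γ z =>
    ⟨({x | ∃ h ∈ H, h • (z : X) = x}, {x | ∃ k ∈ K, k • ((γ : G)⁻¹ • (z : X)) = x}),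
      fmem γ z⟩
  have hwd : ∀ (γ : R) (a b : {z : X // z ∈ D₀ ∩ (γ : G) • DK}),
      (∃ g : G, g ∈ H ∧ (γ : G)⁻¹ * g * (γ : G) ∈ K ∧ g • (a : X) = (b : X)) →
      f γ a = f γ b := by
    rintro γ a b ⟨g, hg, hgk, hab⟩
    apply Subtype.ext
    refine Prod.ext ?_ ?_
    · exact orbset_eq H hg hab
    · exact orbset_eq K hgk (by simp [mul_smul, hab])
  refine ⟨fun s => Quot.lift (f s.1) (hwd s.1) s.2, ⟨?_, ?_⟩, fun γ z hz => rfl⟩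
  · -- injectivity
    rintro ⟨γ₁, q₁⟩ ⟨γ₂, q₂⟩
    induction q₁ using Quot.ind with
    | _ a =>
    induction q₂ using Quot.ind with
    | _ b =>
    intro heq
    have heq' := congrArg (Subtype.val) heq
    simp only [f] at heq'
    have h1 : ({x | ∃ h ∈ H, h • (a : X) = x} : Set X)
        = {x | ∃ h ∈ H, h • (b : X) = x} := congrArg Prod.fst heq'
    have h2 : ({x | ∃ k ∈ K, k • ((γ₁ : G)⁻¹ • (a : X)) = x} : Set X)
        = {x | ∃ k ∈ K, k • ((γ₂ : G)⁻¹ • (b : X)) = x} := congrArg Prod.snd heq'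
    -- obtain h ∈ H with h • a = b
    have hb : (b : X) ∈ ({x | ∃ h ∈ H, h • (a : X) = x} : Set X) := by
      rw [h1]; exact ⟨1, one_mem _, one_smul _ _⟩
    obtain ⟨h, hh, hhab⟩ := hb
    -- obtain k ∈ K with k • (γ₁⁻¹ • a) = γ₂⁻¹ • b
    have hk' : ((γ₂ : G)⁻¹ • (b : X)) ∈
        ({x | ∃ k ∈ K, k • ((γ₁ : G)⁻¹ • (a : X)) = x} : Set X) := by
      rw [h2]; exact ⟨1, one_mem _, one_smul _ _⟩
    obtain ⟨k, hk, hkab⟩ := hk'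
    -- derive group identity via freeness
    have key : (h⁻¹ * ((γ₂ : G) * k * (γ₁ : G)⁻¹)) • (a : X) = (a : X) := by
      have : ((γ₂ : G) * k * (γ₁ : G)⁻¹) • (a : X) = (b : X) := by
        have := congrArg (fun x => (γ₂ : G) • x) hkab
        simpa [mul_smul] using this
      rw [mul_smul, this, ← hhab, inv_smul_smul]
    have hgrp := hfree _ _ key
    have hγeq : ((γ₁ : G) : G) = (γ₂ : G) := by
      apply hRuniq _ γ₁.2 _ γ₂.2
      refine ⟨h, hh, k⁻¹, inv_mem hk, ?_⟩
      have : (γ₂ : G) * k * (γ₁ : G)⁻¹ = h := by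
        have := congrArg (fun x => h * x) hgrp
        simpa [mul_assoc] using this
      rw [← this]; group
    have hγ : γ₁ = γ₂ := Subtype.ext hγeq
    subst hγ
    have hrel : ∃ g : G, g ∈ H ∧ (γ₁ : G)⁻¹ * g * (γ₁ : G) ∈ K ∧ g • (a : X) = (b : X) := by
      refine ⟨h, hh, ?_, hhab⟩
      have hhk : (γ₁ : G)⁻¹ * h * (γ₁ : G) = k := by
        have h1 : (γ₁ : G) * k * (γ₁ : G)⁻¹ = h := by
          have := congrArg (fun x => h * x) hgrp
          simpa [mul_assoc] using this
        rw [← h1]; group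
      rw [hhk]; exact hk
    exact congrArg (fun q => (⟨γ₁, q⟩ : Σ γ : R, _)) (Quot.sound hrel)
  · -- surjectivity
    rintro ⟨p, hp⟩
    obtain ⟨z, hz, w, hw, horb, rfl⟩ := hp
    have hzw : ∃ g : G, g • w = z := by
      have : z ∈ MulAction.orbit G w := by
        rw [← horb]; exact MulAction.mem_orbit_self z
      obtain ⟨g, hg⟩ := this
      exact ⟨g, hg⟩
    obtain ⟨g, hg⟩ := hzw
    obtain ⟨γ, hγR, h, hh, k, hk, hgdec⟩ := hRex g
    set z' : X := h⁻¹ • z with hz'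
    have hz'D₀ : z' ∈ D₀ := by
      rw [hz', ← hD₀ h⁻¹ (inv_mem hh)]
      exact Set.smul_mem_smul_set hz
    have hz'k : γ⁻¹ • z' = k • w := by
      rw [hz', ← hg, hgdec]
      simp [mul_smul]
    have hz'γ : z' ∈ γ • DK := by
      rw [Set.mem_smul_set_iff_inv_smul_mem, hz'k, ← hDK k hk]
      exact Set.smul_mem_smul_set hw
    refine ⟨⟨⟨γ, hγR⟩, Quot.mk _ ⟨z', Set.mem_inter hz'D₀ hz'γ⟩⟩, ?_⟩
    apply Subtype.ext
    refine Prod.ext ?_ ?_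
    · exact orbset_eq H hh (smul_inv_smul h z)
    · refine orbset_eq K (inv_mem hk) ?_
      rw [hz'k, inv_smul_smul]
end

section
/- Let G be a group acting freely on a set X (g•x = x implies g = 1). Let H and K be subgroups of G, and D₀, D_K ⊆ X subsets with h•D₀ = D₀ for all h ∈ H and k•D_K = D_K for all k ∈ K. Fix γ ∈ G and let z₁, z₂ ∈ D₀ ∩ γ•D_K. Then H•z₁ = H•z₂ and K•(γ⁻¹•z₁) = K•(γ⁻¹•z₂) hold simultaneously if and only if z₂ ∈ (H ∩ γKγ⁻¹)•z₁. -/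
open Pointwise

/-- Fiber identification step: for a free action and fixed `γ`, two points of
`D₀ ∩ γ•D_K` have the same pair of orbits `(H•z, K•(γ⁻¹•z))` iff they lie in the
same `(H ∩ γKγ⁻¹)`-orbit. -/
theorem stmt_4 {G X : Type*} [Group G] [MulAction G X]
    (hfree : ∀ (g : G) (x : X), g • x = x → g = 1)
    (H K : Subgroup G) (D₀ DK : Set X)
    (hD₀ : ∀ h ∈ H, h • D₀ = D₀) (hDK : ∀ k ∈ K, k • DK = DK)
    (γ : G) (z₁ z₂ : X)
    (hz₁ : z₁ ∈ D₀ ∩ γ • DK) (hz₂ : z₂ ∈ D₀ ∩ γ • DK) :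
    ({x | ∃ h ∈ H, h • z₁ = x} = {x | ∃ h ∈ H, h • z₂ = x} ∧
      {x | ∃ k ∈ K, k • (γ⁻¹ • z₁) = x} = {x | ∃ k ∈ K, k • (γ⁻¹ • z₂) = x}) ↔
    ∃ g : G, g ∈ H ∧ γ⁻¹ * g * γ ∈ K ∧ g • z₁ = z₂ := by
  constructor
  · rintro ⟨hH, hK⟩
    have h2 : z₂ ∈ {x | ∃ h ∈ H, h • z₁ = x} := by
      rw [hH]; exact ⟨1, one_mem _, one_smul _ _⟩
    obtain ⟨h, hh, hhz⟩ := h2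
    have k2 : (γ⁻¹ • z₂ : X) ∈ {x | ∃ k ∈ K, k • (γ⁻¹ • z₁) = x} := by
      rw [hK]; exact ⟨1, one_mem _, one_smul _ _⟩
    obtain ⟨k, hk, hkz⟩ := k2
    -- (γ k γ⁻¹) • z₁ = z₂
    have hkz' : (γ * k * γ⁻¹) • z₁ = z₂ := by
      have := congrArg (γ • ·) hkz
      simpa [mul_smul] using this
    have : (h⁻¹ * (γ * k * γ⁻¹)) • z₁ = z₁ := by
      rw [mul_smul, hkz', ← hhz, ← mul_smul, inv_mul_cancel, one_smul]
    have heq : γ * k * γ⁻¹ = h :=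
      (inv_mul_eq_one.mp (hfree _ _ this)).symm
    refine ⟨h, hh, ?_, hhz⟩
    rw [← heq]
    simpa [mul_assoc] using hk
  · rintro ⟨g, hgH, hgK, hgz⟩
    constructor
    · ext x
      constructor
      · rintro ⟨h, hh, rfl⟩
        exact ⟨h * g⁻¹, mul_mem hh (inv_mem hgH), by rw [mul_smul, ← hgz, inv_smul_smul]⟩
      · rintro ⟨h, hh, rfl⟩
        exact ⟨h * g, mul_mem hh hgH, by rw [mul_smul, hgz]⟩
    · have hz' : (γ⁻¹ * g * γ) • (γ⁻¹ • z₁) = γ⁻¹ • z₂ := by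
        rw [← hgz]; simp [mul_smul]
      ext x
      constructor
      · rintro ⟨k, hk, rfl⟩
        refine ⟨k * (γ⁻¹ * g * γ)⁻¹, mul_mem hk (inv_mem hgK), ?_⟩
        rw [mul_smul, ← hz', inv_smul_smul]
      · rintro ⟨k, hk, rfl⟩
        exact ⟨k * (γ⁻¹ * g * γ), mul_mem hk hgK, by rw [mul_smul, hz']⟩
end

section
/- In the polynomial ring ℚ[X, Y] in two commuting variables (X playing the role of w and Y of its conjugate w̄), define a sequence g_k by g_0 = 1 and g_{k+1} = (X·Y − 1)·g_k − ( Y·∂_Y g_k + X·∂_X g_k ) + ∂_X ∂_Y g_k, where ∂_X and ∂_Y are the formal partial derivatives. Then for every k ≥ 0, g_k = Σ_{r=0}^{k} (−1)^{r+k} · ( (k!)² / ((r!)²·(k−r)!) ) · (X·Y)^r. -/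
open MvPolynomial Finset

noncomputable def bb (k r : ℕ) : ℚ :=
  (k.factorial : ℚ)^2 / ((r.factorial : ℚ)^2 * ((k - r).factorial : ℚ))

noncomputable def AA (k r : ℕ) : ℚ := if r ≤ k then (-1)^(r+k) * bb k r else 0

lemma facQ_ne (n : ℕ) : (n.factorial : ℚ) ≠ 0 := by exact_mod_cast n.factorial_ne_zero


lemma sgnE (a b : ℕ) : (-1:ℚ)^(a + b*2) = (-1)^a := by rw [pow_add, pow_mul']; norm_num

lemma bb_self (n : ℕ) : bb n n = 1 := by
  simp only [bb, Nat.sub_self, Nat.factorial_zero, Nat.cast_one, mul_one]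
  exact div_self (pow_ne_zero 2 (facQ_ne n))

lemma bb_zero (m : ℕ) : bb (m+2) 0 = bb (m+1) 0 + bb (m+1) 1 := by
  simp only [bb, Nat.sub_zero, show (m+1)-1 = m from rfl, Nat.factorial_zero, Nat.factorial_one,
    show m+2 = (m+1)+1 from rfl, Nat.factorial_succ (m+1), Nat.factorial_succ m]
  push_cast
  field_simp
  ring

lemma bb_top (s : ℕ) : bb (s+2) (s+1) = bb (s+1) s + (3+2*(s:ℚ)) * bb (s+1) (s+1) := by
  simp only [bb, show (s+2)-(s+1) = 1 from by omega, show (s+1)-s = 1 from by omega,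
    Nat.sub_self, Nat.factorial_zero, Nat.factorial_one,
    show s+2 = (s+1)+1 from rfl, Nat.factorial_succ (s+1), Nat.factorial_succ s]
  push_cast
  field_simp
  ring

lemma keypos (s m : ℕ) :
    bb (s+2+m+1) (s+1) = bb (s+2+m) s + (1+2*((s:ℚ)+1)) * bb (s+2+m) (s+1)
      + (((s:ℚ)+1)+1)^2 * bb (s+2+m) (s+2) := by
  have e1 : s+2+m+1 - (s+1) = m+2 := by omega
  have e2 : s+2+m - s = m+2 := by omega
  have e3 : s+2+m - (s+1) = m+1 := by omega
  have e4 : s+2+m - (s+2) = m := by omega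
  simp only [bb, e1, e2, e3, e4]
  simp only [show s+2+m+1 = (s+m+2)+1 from by ring, show s+2+m = (s+m+1)+1 from by ring,
    show s+m+2 = (s+m+1)+1 from rfl, show m+2 = (m+1)+1 from rfl,
    show s+1+1 = (s+1)+1 from rfl, show s+2 = (s+1)+1 from rfl, Nat.factorial_succ]
  push_cast
  field_simp
  ring

lemma key (k r : ℕ) (hr : r ≤ k + 1) :
    AA (k+1) r = (if r = 0 then 0 else AA k (r-1)) - (1+2*(r:ℚ)) * AA k r
      + ((r:ℚ)+1)^2 * AA k (r+1) := by
  rcases r with _ | s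
  · rcases k with _ | m
    · norm_num [AA, bb]
    · simp only [AA, if_pos (Nat.zero_le _), if_pos rfl, if_pos (by omega : 1 ≤ m+1)]
      rw [show (0+(m+1+1)) = m + 1*2 from by ring, sgnE,
        show (0+(m+1)) = (m+1) + 0*2 from by ring, sgnE,
        show (1+(m+1)) = m + 1*2 from by ring, sgnE, pow_succ]
      push_cast
      linear_combination ((-1:ℚ)^m) * bb_zero m
  · rcases Nat.lt_or_ge (s+1+1) (k+1) with h | h
    · obtain ⟨m, rfl⟩ : ∃ m, k = s+2+m := ⟨k - (s+2), by omega⟩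
      simp only [AA, if_pos (by omega : s+1 ≤ s+2+m+1), if_pos (by omega : s+1 ≤ s+2+m),
        if_pos (by omega : s+1+1 ≤ s+2+m), if_neg (Nat.succ_ne_zero s),
        Nat.succ_sub_one, if_pos (by omega : s ≤ s+2+m)]
      rw [show (s+1+(s+2+m+1)) = m + (s+2)*2 from by ring, sgnE,
        show (s+(s+2+m)) = m + (s+1)*2 from by ring, sgnE,
        show (s+1+(s+2+m)) = (m+1) + (s+1)*2 from by ring, sgnE,
        show (s+1+1+(s+2+m)) = m + (s+2)*2 from by ring, sgnE, pow_succ]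
      push_cast
      linear_combination ((-1:ℚ)^m) * keypos s m
    · rcases Nat.lt_or_ge (s+1) (k+1) with h2 | h2
      · -- r = k, k = s+1
        obtain rfl : k = s+1 := by omega
        simp only [AA, if_pos (by omega : s+1 ≤ s+1+1), if_pos (le_refl (s+1)),
          if_neg (by omega : ¬ s+1+1 ≤ s+1), if_neg (Nat.succ_ne_zero s),
          Nat.succ_sub_one, if_pos (by omega : s ≤ s+1)]
        rw [show (s+1+(s+1+1)) = 1 + (s+1)*2 from by ring, sgnE,
          show (s+(s+1)) = 1 + s*2 from by ring, sgnE,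
          show (s+1+(s+1)) = 0 + (s+1)*2 from by ring, sgnE]
        push_cast
        linear_combination (-1:ℚ) * bb_top s
      · -- r = k+1
        have hs : s = k := by omega
        subst hs
        simp only [AA, if_pos (le_refl (s+1)), if_neg (by omega : ¬ s+1 ≤ s),
          if_neg (by omega : ¬ s+1+1 ≤ s), if_neg (Nat.succ_ne_zero s),
          Nat.succ_sub_one, if_pos (le_refl s)]
        rw [show (s+1+(s+1)) = 0 + (s+1)*2 from by ring, sgnE,
          show (s+s) = 0 + s*2 from by ring, sgnE]
        rw [bb_self, bb_self]
        push_cast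
        ring

/-- Explicit formula for the normalized Laguerre-type polynomials: with
`g_0 = 1` and `g_{k+1} = (XY − 1)g_k − (Y ∂_Y g_k + X ∂_X g_k) + ∂_X ∂_Y g_k`
in `ℚ[X, Y]`, one has `g_k = Σ_{r=0}^{k} (−1)^{r+k} (k!)²/((r!)²(k−r)!) (XY)^r`. -/
theorem stmt_6 (g : ℕ → MvPolynomial (Fin 2) ℚ)
    (h0 : g 0 = 1)
    (hrec : ∀ k, g (k + 1) =
      (X 0 * X 1 - 1) * g k - (X 1 * pderiv 1 (g k) + X 0 * pderiv 0 (g k))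
        + pderiv 0 (pderiv 1 (g k))) :
    ∀ k, g k = ∑ r ∈ Finset.range (k + 1),
      C ((-1 : ℚ) ^ (r + k) *
          ((k.factorial : ℚ) ^ 2 / ((r.factorial : ℚ) ^ 2 * ((k - r).factorial : ℚ)))) *
        (X 0 * X 1) ^ r := by
  -- rewrite target in terms of AA
  have hAA : ∀ k, (∑ r ∈ Finset.range (k + 1),
      C ((-1 : ℚ) ^ (r + k) *
          ((k.factorial : ℚ) ^ 2 / ((r.factorial : ℚ) ^ 2 * ((k - r).factorial : ℚ)))) *
        (X 0 * X 1) ^ r : MvPolynomial (Fin 2) ℚ)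
      = ∑ r ∈ Finset.range (k + 1), C (AA k r) * (X 0 * X 1) ^ r := by
    intro k
    refine Finset.sum_congr rfl fun r hr => ?_
    rw [Finset.mem_range] at hr
    rw [AA, if_pos (by omega), bb]
  -- helper derivative lemmas
  have hd1 : ∀ (c : ℚ) (r : ℕ),
      X 1 * pderiv 1 (C c * (X (0:Fin 2) * X 1)^r : MvPolynomial (Fin 2) ℚ) = C ((r:ℚ) * c) * (X 0 * X 1)^r := by
    intro c r
    cases r with
    | zero => simp
    | succ s =>
      simp [pderiv_C_mul, pderiv_pow, pderiv_mul, pderiv_X_self, pderiv_X_of_ne]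
      ring
  have hd0 : ∀ (c : ℚ) (r : ℕ),
      X 0 * pderiv 0 (C c * (X (0:Fin 2) * X 1)^r : MvPolynomial (Fin 2) ℚ) = C ((r:ℚ) * c) * (X 0 * X 1)^r := by
    intro c r
    cases r with
    | zero => simp
    | succ s =>
      simp [pderiv_C_mul, pderiv_pow, pderiv_mul, pderiv_X_self, pderiv_X_of_ne]
      ring
  have hd01 : ∀ (c : ℚ) (r : ℕ),
      pderiv 0 (pderiv 1 (C c * (X (0:Fin 2) * X 1)^r : MvPolynomial (Fin 2) ℚ)) = C ((r:ℚ)^2 * c) * (X 0 * X 1)^(r-1) := by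
    intro c r
    cases r with
    | zero => simp
    | succ s =>
      cases s with
      | zero => simp [pderiv_C_mul, pderiv_pow, pderiv_mul, pderiv_X_self, pderiv_X_of_ne]
      | succ t =>
        simp [pderiv_C_mul, pderiv_pow, pderiv_mul, pderiv_X_self, pderiv_X_of_ne]
        ring
  intro k
  induction k with
  | zero => rw [h0]; simp [bb]
  | succ k ih =>
    rw [hAA] at ih ⊢
    rw [hrec k, ih]
    simp only [map_sum, Finset.mul_sum, ← Finset.sum_sub_distrib, ← Finset.sum_add_distrib]
    have hterm : ∀ r ∈ range (k+1),
        ((X (0:Fin 2) * X 1 - 1) : MvPolynomial (Fin 2) ℚ) * (C (AA k r) * (X 0 * X 1) ^ r)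
          - (X 1 * pderiv 1 (C (AA k r) * (X 0 * X 1) ^ r)
             + X 0 * pderiv 0 (C (AA k r) * (X 0 * X 1) ^ r))
          + pderiv 0 (pderiv 1 (C (AA k r) * (X 0 * X 1) ^ r))
        = C (AA k r) * (X 0 * X 1)^(r+1)
          - C ((1+2*(r:ℚ)) * AA k r) * (X 0 * X 1)^r
          + C ((r:ℚ)^2 * AA k r) * (X 0 * X 1)^(r-1) := by
      intro r _
      rw [hd1, hd0, hd01]
      rw [sub_mul, one_mul, pow_succ]
      simp only [map_mul, map_add, map_one, map_ofNat]
      ring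
    refine (Finset.sum_congr rfl hterm).trans ?_
    rw [Finset.sum_add_distrib, Finset.sum_sub_distrib]
    -- now reindex the three sums to range (k+2)
    have hT1 : (∑ r ∈ range (k+1), C (AA k r) * (X 0 * X 1)^(r+1) : MvPolynomial (Fin 2) ℚ)
        = ∑ r ∈ range (k+2), C (if r = 0 then 0 else AA k (r-1)) * (X 0 * X 1)^r := by
      rw [Finset.sum_range_succ' (fun r => C (if r = 0 then 0 else AA k (r-1)) * (X 0 * X 1)^r) (k+1)]
      simp
    have hT2 : (∑ r ∈ range (k+1), C ((1+2*(r:ℚ)) * AA k r) * (X 0 * X 1)^r : MvPolynomial (Fin 2) ℚ)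
        = ∑ r ∈ range (k+2), C ((1+2*(r:ℚ)) * AA k r) * (X 0 * X 1)^r := by
      rw [Finset.sum_range_succ (fun r => C ((1+2*(r:ℚ)) * AA k r) * (X 0 * X 1)^r) (k+1)]
      rw [AA, if_neg (by omega)]
      simp
    have hT3 : (∑ r ∈ range (k+1), C ((r:ℚ)^2 * AA k r) * (X 0 * X 1)^(r-1) : MvPolynomial (Fin 2) ℚ)
        = ∑ r ∈ range (k+2), C (((r:ℚ)+1)^2 * AA k (r+1)) * (X 0 * X 1)^r := by
      rw [Finset.sum_range_succ' (fun r => C ((r:ℚ)^2 * AA k r) * (X 0 * X 1)^(r-1)) k]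
      rw [Finset.sum_range_succ (fun r => C (((r:ℚ)+1)^2 * AA k (r+1)) * (X 0 * X 1)^r) (k+1),
        Finset.sum_range_succ (fun r => C (((r:ℚ)+1)^2 * AA k (r+1)) * (X 0 * X 1)^r) k]
      rw [show AA k (k+1) = 0 from by rw [AA, if_neg (by omega)],
        show AA k (k+1+1) = 0 from by rw [AA, if_neg (by omega)]]
      simp only [Nat.cast_zero, ne_eq, map_zero, zero_mul, mul_zero, map_mul]
      simp
    rw [hT1, hT2, hT3, ← Finset.sum_sub_distrib, ← Finset.sum_add_distrib]
    refine Finset.sum_congr rfl fun r hr => ?_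
    rw [Finset.mem_range] at hr
    rw [← sub_mul, ← add_mul, ← map_sub, ← map_add, key k r (by omega)]
end

section
/- Let R = ℝ[z, z̄] be the polynomial ring in two commuting formal variables z and z̄, with formal partial derivatives ∂_z, ∂_{z̄}. Define ℝ-linear operators A, B : R → R by A f = 2·z̄·f − (1/π)·∂_z f and B f = 2·z·f − (1/π)·∂_{z̄} f, and for nonnegative integers a, b set F_{a,b} = A^a ( B^b (1) ) ∈ R. Then for all a ≠ b, ∫_ℂ F_{a,b}(z, conj(z)) · e^{−2π|z|²} dλ(z) = 0, where F_{a,b}(z, conj(z)) denotes evaluation of the polynomial at the pair (z, conj z) and λ is Lebesgue measure on ℂ ≅ ℝ². -/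
/-!
Give `z` weight `1` and `z̄` weight `-1`. Multiplication by `z̄` and `∂_z` both lower the weight
by one, so `A` lowers it by one; symmetrically `B` raises it by one, and `F_{a,b}` is weighted
homogeneous of weight `b - a`. A polynomial of weight `d` evaluated at `(z, z̄)` picks up the
factor `c ^ d` under the rotation `z ↦ c z` with `|c| = 1`, while the Gaussian and Lebesgue
measure are rotation invariant. Rotating by a `c` with `c ^ d = -1` shows that the integral
equals its own negative once `d ≠ 0`.
-/

open MvPolynomial MeasureTheory

namespace MvPolynomial.IsWeightedHomogeneous

variable {R σ M : Type*}

theorem iterate [CommSemiring R] [AddCommMonoid M] {w : σ → M} {φ : MvPolynomial σ R} {m δ : M}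
    {T : MvPolynomial σ R → MvPolynomial σ R}
    (hT : ∀ {f m}, IsWeightedHomogeneous w f m → IsWeightedHomogeneous w (T f) (δ + m))
    (hφ : IsWeightedHomogeneous w φ m) (n : ℕ) :
    IsWeightedHomogeneous w (T^[n] φ) (n • δ + m) := by
  induction n with
  | zero => simpa using hφ
  | succ n ih => simpa [Function.iterate_succ_apply', succ_nsmul', add_assoc] using hT ih

theorem mul_X_sub_mul_pderiv [CommRing R] [AddCommGroup M] {w : σ → M}
    {φ p q : MvPolynomial σ R} {m : M} {i j : σ} (hp : IsWeightedHomogeneous w p 0)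
    (hq : IsWeightedHomogeneous w q 0) (hφ : IsWeightedHomogeneous w φ m) (hij : w j = -w i) :
    IsWeightedHomogeneous w (p * X i * φ - q * pderiv j φ) (w i + m) := by
  have hX : IsWeightedHomogeneous w (p * X i * φ) (0 + w i + m) :=
    (hp.mul (isWeightedHomogeneous_X R w i)).mul hφ
  have hD : IsWeightedHomogeneous w (q * pderiv j φ) (0 + (w i + m)) :=
    hq.mul (hφ.pderiv (by rw [hij]; abel))
  rw [zero_add] at hX hD
  exact hX.sub hD

theorem aeval_zpow_mul [CommSemiring R] {K : Type*} [Field K] [Algebra R K] {w : σ → ℤ}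
    {φ : MvPolynomial σ R} {m : ℤ} (hφ : IsWeightedHomogeneous w φ m) {c : K} (hc : c ≠ 0)
    (x : σ → K) :
    aeval (fun i => c ^ w i * x i) φ = c ^ m * aeval x φ := by
  induction hφ using induction_on with
  | zero => simp
  | add p q _ _ hp hq => simp only [map_add, hp, hq, mul_add]
  | monomial d r hd =>
    have hprod : ∀ s : Finset σ, ∏ i ∈ s, (c ^ w i) ^ d i = c ^ ∑ i ∈ s, d i • w i := by
      classical
      intro s
      induction s using Finset.induction_on with
      | empty => simp
      | insert i s hi ih =>
        rw [Finset.prod_insert hi, Finset.sum_insert hi, zpow_add₀ hc, ih, ← zpow_natCast,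
          ← zpow_mul, nsmul_eq_mul, mul_comm (w i), mul_comm]
    simp only [aeval_monomial, mul_pow, Finsupp.prod_mul, ← hd, Finsupp.weight_apply]
    rw [Finsupp.prod, Finsupp.sum, hprod]
    ring

theorem aeval_circle_mul [CommSemiring R] [Algebra R ℂ] {φ : MvPolynomial (Fin 2) R} {d : ℤ}
    (hφ : IsWeightedHomogeneous ![1, -1] φ d) (c : Circle) (z : ℂ) :
    aeval ![c * z, starRingEnd ℂ (c * z)] φ = c ^ d * aeval ![z, starRingEnd ℂ z] φ := by
  have hscale : ![c * z, starRingEnd ℂ (c * z)]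
      = fun i => (c : ℂ) ^ (![1, -1] : Fin 2 → ℤ) i * ![z, starRingEnd ℂ z] i := by
    ext i
    fin_cases i <;> simp [← Circle.coe_inv_eq_conj]
  rw [hscale, hφ.aeval_zpow_mul c.coe_ne_zero]

end MvPolynomial.IsWeightedHomogeneous

theorem integral_eq_zero_of_circle_equivariant {E : Type*} [NormedAddCommGroup E]
    [NormedSpace ℂ E] {g : ℂ → E} {d : ℤ} (hd : d ≠ 0)
    (hg : ∀ (c : Circle) (z : ℂ), g (c * z) = ((c : ℂ) ^ d) • g z) :
    ∫ z, g z = 0 := by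
  set c := Circle.exp (Real.pi / d)
  have hc : (c : ℂ) ^ d = -1 := by
    rw [← Circle.coe_zpow, ← Circle.exp_intCast_mul, mul_div_cancel₀ _ (by exact_mod_cast hd),
      Circle.coe_exp, Complex.exp_pi_mul_I]
  have h : ∫ z, g z = -∫ z, g z := calc
    ∫ z, g z = ∫ z, g (rotation c z) := (integral_comp (rotation c) g).symm
    _ = -∫ z, g z := by simp [rotation_apply, hg, hc, integral_neg]
  have : IsAddTorsionFree E := .of_isTorsionFree ℂ E
  exact self_eq_neg.mp h

/-- With `A f = 2z̄f − π⁻¹∂_z f` and `B f = 2zf − π⁻¹∂_{z̄} f` on `ℝ[z, z̄]`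
(variable `0` is `z`, variable `1` is `z̄`) and `F_{a,b} = A^a(B^b 1)`, for `a ≠ b`
the integral `∫_ℂ F_{a,b}(z, z̄) e^{−2π|z|²} dλ(z)` vanishes. -/
theorem stmt_10 (A B : MvPolynomial (Fin 2) ℝ → MvPolynomial (Fin 2) ℝ)
    (hA : ∀ f, A f = 2 * X 1 * f - C (1 / Real.pi) * pderiv 0 f)
    (hB : ∀ f, B f = 2 * X 0 * f - C (1 / Real.pi) * pderiv 1 f)
    (a b : ℕ) (hab : a ≠ b) :
    ∫ z : ℂ, (aeval ![z, starRingEnd ℂ z] (A^[a] (B^[b] 1)) : ℂ) *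
      Complex.exp (-(2 * (Real.pi : ℂ) * ((‖z‖ : ℝ) : ℂ) ^ 2)) = 0 := by
  let w : Fin 2 → ℤ := ![1, -1]
  have h2 : IsWeightedHomogeneous w (2 : MvPolynomial (Fin 2) ℝ) 0 := by
    rw [← map_ofNat C 2]
    exact isWeightedHomogeneous_C w 2
  have hπ := isWeightedHomogeneous_C w (1 / Real.pi)
  have hAw : ∀ {f m}, IsWeightedHomogeneous w f m → IsWeightedHomogeneous w (A f) (-1 + m) :=
    fun hf => hA _ ▸ h2.mul_X_sub_mul_pderiv hπ hf (i := 1) (j := 0) rfl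
  have hBw : ∀ {f m}, IsWeightedHomogeneous w f m → IsWeightedHomogeneous w (B f) (1 + m) :=
    fun hf => hB _ ▸ h2.mul_X_sub_mul_pderiv hπ hf (i := 0) (j := 1) rfl
  have hF : IsWeightedHomogeneous w (A^[a] (B^[b] 1)) (b - a) := by
    convert (isWeightedHomogeneous_one ℝ w).iterate hBw b |>.iterate hAw a using 1
    simp only [smul_neg, nsmul_eq_mul, mul_one, add_zero]
    ring
  refine integral_eq_zero_of_circle_equivariant (d := b - a) (by omega) fun c z => ?_
  rw [hF.aeval_circle_mul, norm_mul, Circle.norm_coe, one_mul, smul_eq_mul, mul_assoc]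
end

section
/- Let R = ℝ[z, z̄] be the polynomial ring in two commuting formal variables z and z̄, with formal partial derivatives ∂_z, ∂_{z̄}. Define ℝ-linear operators A, B : R → R by A f = 2·z̄·f − (1/π)·∂_z f and B f = 2·z·f − (1/π)·∂_{z̄} f, and for nonnegative integers a, b set F_{a,b} = A^a ( B^b (1) ) ∈ R. If b > a ≥ 0, then every monomial z̄^α z^β occurring in F_{a,b} with nonzero coefficient satisfies β − α ≥ b − a; in particular β > α for every such monomial. -/
/-!
Give `zᵝ z̄ᵅ` the charge `β - α`. Multiplication by `z` and differentiation in `z̄` raise the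
charge of every monomial by one, multiplication by `z̄` and differentiation in `z` lower it by one.
Hence `B` raises the minimal charge of a polynomial by at least one and `A` lowers it by at most
one, so starting from `1` (charge `0`) the polynomial `F_{a,b}` has minimal charge at least `b - a`.
-/

open MvPolynomial Set

theorem Set.mapsTo_iterate_shift_up {α : Type*} {S : ℕ → Set α} {g : α → α}
    (h : ∀ k, MapsTo g (S k) (S (k + 1))) (n k : ℕ) : MapsTo g^[n] (S k) (S (k + n)) := by
  induction n with
  | zero => exact mapsTo_id _
  | succ n ih => simpa only [Function.iterate_succ', ← add_assoc] using (h (k + n)).comp ih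

theorem Set.mapsTo_iterate_shift_down {α : Type*} {S : ℕ → Set α} {g : α → α}
    (h : ∀ k, MapsTo g (S (k + 1)) (S k)) (n k : ℕ) : MapsTo g^[n] (S (k + n)) (S k) := by
  induction n generalizing k with
  | zero => exact mapsTo_id _
  | succ n ih => simpa only [Function.iterate_succ, ← add_assoc] using ih k |>.comp (h (k + n))

namespace MvPolynomial

variable {σ : Type*}

/-- With `i = z` and `j = z̄`, membership in `gapAtLeast R i j k` is the paper's `μ(f) ≥ k`. -/
noncomputable def gapAtLeast (R : Type*) [CommSemiring R] (i j : σ) (k : ℕ) :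
    Submodule R (MvPolynomial σ R) :=
  restrictSupport R {m | m j + k ≤ m i}

section CommSemiring

variable {R : Type*} [CommSemiring R] {i j : σ} {k : ℕ} {f : MvPolynomial σ R}

theorem mem_gapAtLeast_iff :
    f ∈ gapAtLeast R i j k ↔ ∀ m ∈ f.support, m j + k ≤ m i :=
  mem_restrictSupport_iff R

theorem one_mem_gapAtLeast_zero : (1 : MvPolynomial σ R) ∈ gapAtLeast R i j 0 := by
  rw [one_def]
  exact (monomial_mem_restrictSupport R).mpr (Or.inl (by simp))

theorem add_single_mem_support_of_mem_support_pderiv {m : σ →₀ ℕ}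
    (hm : m ∈ (pderiv i f).support) : m + Finsupp.single i 1 ∈ f.support := by
  rw [mem_support_iff, coeff_pderiv] at hm
  exact mem_support_iff.mpr (left_ne_zero_of_mul hm)

theorem X_mul_mem_gapAtLeast_succ (hij : i ≠ j) (hf : f ∈ gapAtLeast R i j k) :
    X i * f ∈ gapAtLeast R i j (k + 1) := by
  rw [mem_gapAtLeast_iff] at hf ⊢
  simp only [support_X_mul, Finset.mem_map, addLeftEmbedding_apply]
  rintro _ ⟨m, hm, rfl⟩
  have := hf m hm
  simp only [Finsupp.add_apply, Finsupp.single_eq_same, Finsupp.single_eq_of_ne hij.symm]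
  omega

theorem X_mul_mem_gapAtLeast (hij : i ≠ j) (hf : f ∈ gapAtLeast R i j (k + 1)) :
    X j * f ∈ gapAtLeast R i j k := by
  rw [mem_gapAtLeast_iff] at hf ⊢
  simp only [support_X_mul, Finset.mem_map, addLeftEmbedding_apply]
  rintro _ ⟨m, hm, rfl⟩
  have := hf m hm
  simp only [Finsupp.add_apply, Finsupp.single_eq_same, Finsupp.single_eq_of_ne hij]
  omega

theorem pderiv_mem_gapAtLeast_succ (hij : i ≠ j) (hf : f ∈ gapAtLeast R i j k) :
    pderiv j f ∈ gapAtLeast R i j (k + 1) := by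
  rw [mem_gapAtLeast_iff] at hf ⊢
  intro m hm
  have := hf _ (add_single_mem_support_of_mem_support_pderiv hm)
  simp only [Finsupp.add_apply, Finsupp.single_eq_same, Finsupp.single_eq_of_ne hij] at this
  omega

theorem pderiv_mem_gapAtLeast (hij : i ≠ j) (hf : f ∈ gapAtLeast R i j (k + 1)) :
    pderiv i f ∈ gapAtLeast R i j k := by
  rw [mem_gapAtLeast_iff] at hf ⊢
  intro m hm
  have := hf _ (add_single_mem_support_of_mem_support_pderiv hm)
  simp only [Finsupp.add_apply, Finsupp.single_eq_same,
    Finsupp.single_eq_of_ne hij.symm] at this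
  omega

end CommSemiring

variable {R : Type*} [CommRing R] {i j : σ} {k : ℕ} {f : MvPolynomial σ R}

theorem raising_mem_gapAtLeast_succ (hij : i ≠ j) (c : R) (hf : f ∈ gapAtLeast R i j k) :
    2 * X i * f - C c * pderiv j f ∈ gapAtLeast R i j (k + 1) := by
  have hX := X_mul_mem_gapAtLeast_succ hij hf
  rw [mul_assoc, two_mul, C_mul']
  exact sub_mem (add_mem hX hX) (Submodule.smul_mem _ c (pderiv_mem_gapAtLeast_succ hij hf))

theorem lowering_mem_gapAtLeast (hij : i ≠ j) (c : R) (hf : f ∈ gapAtLeast R i j (k + 1)) :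
    2 * X j * f - C c * pderiv i f ∈ gapAtLeast R i j k := by
  have hX := X_mul_mem_gapAtLeast hij hf
  rw [mul_assoc, two_mul, C_mul']
  exact sub_mem (add_mem hX hX) (Submodule.smul_mem _ c (pderiv_mem_gapAtLeast hij hf))

end MvPolynomial

-- Variable `0` is `z` and variable `1` is `z̄`.
/-- With `A f = 2z̄f − π⁻¹∂_z f` and `B f = 2zf − π⁻¹∂_{z̄} f` on `ℝ[z, z̄]`
(variable `0` is `z`, variable `1` is `z̄`) and `F_{a,b} = A^a(B^b 1)`, if `b > a`
then every monomial `z̄^α z^β` of `F_{a,b}` satisfies `β − α ≥ b − a`; in particular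
`β > α`. -/
theorem stmt_11 (A B : MvPolynomial (Fin 2) ℝ → MvPolynomial (Fin 2) ℝ)
    (hA : ∀ f, A f = 2 * X 1 * f - C (1 / Real.pi) * pderiv 0 f)
    (hB : ∀ f, B f = 2 * X 0 * f - C (1 / Real.pi) * pderiv 1 f)
    (a b : ℕ) (hab : a < b) :
    ∀ m ∈ (A^[a] (B^[b] (1 : MvPolynomial (Fin 2) ℝ))).support,
      m 1 + (b - a) ≤ m 0 ∧ m 1 < m 0 := by
  let S (k : ℕ) : Set (MvPolynomial (Fin 2) ℝ) := gapAtLeast ℝ (0 : Fin 2) 1 k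
  have hB_raises : ∀ k, MapsTo B (S k) (S (k + 1)) := fun k f hf =>
    hB f ▸ raising_mem_gapAtLeast_succ zero_ne_one _ hf
  have hA_lowers : ∀ k, MapsTo A (S (k + 1)) (S k) := fun k f hf =>
    hA f ▸ lowering_mem_gapAtLeast zero_ne_one _ hf
  have hBb : B^[b] 1 ∈ S (b - a + a) := by
    simpa only [Nat.sub_add_cancel hab.le, zero_add] using
      mapsTo_iterate_shift_up hB_raises b 0 one_mem_gapAtLeast_zero
  have hF := mapsTo_iterate_shift_down hA_lowers a (b - a) hBb
  intro m hm
  have hgap := mem_gapAtLeast_iff.mp hF m hm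
  exact ⟨hgap, by omega⟩
end
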